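/- arXiv:2205.04224 — 3 statements merged into one kernel-verified Lean document; each statement's English description precedes it below -/
import Mathlib

section
/- Every non-simplifiable read-once Boolean formula is evasive: if φ is a Boolean formula over ∧, ∨, ¬ and variables in which every variable occurs at most once, φ is not a constant, and φ contains no occurrence of a Boolean constant, then every decision tree computing the function of φ has depth equal to the number of variables occurring in φ. -/
/-- A decision tree: internal nodes query a variable and branch on its Boolean
value; leaves output a Boolean. -/
inductive DTree (ι : Type) where
  | leaf : Bool → DTree ι
  | node : ι → DTree ι → DTree ι → DTree ι

namespace DTree

variable {ι : Type}

/-- Evaluate a decision tree on an assignment. -/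
def eval : DTree ι → (ι → Bool) → Bool
  | .leaf b, _ => b
  | .node i t f, v => if v i then t.eval v else f.eval v

/-- Depth: maximal number of queries on a root-to-leaf path. -/
def depth : DTree ι → ℕ
  | .leaf _ => 0
  | .node _ t f => 1 + max t.depth f.depth

/-- A tree computes a Boolean function if it agrees with it on all inputs. -/
def Computes (T : DTree ι) (f : (ι → Bool) → Bool) : Prop :=
  ∀ v, T.eval v = f v

end DTree

/-- Decision-tree depth of a Boolean function: minimum depth over all decision
trees computing it. -/
noncomputable def Ddepth {ι : Type} (f : (ι → Bool) → Bool) : ℕ :=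
  sInf {d | ∃ T : DTree ι, T.Computes f ∧ T.depth = d}

/-- Boolean formulas over constants, variables, negation, conjunction,
disjunction. -/
inductive BForm (ι : Type) where
  | const : Bool → BForm ι
  | var : ι → BForm ι
  | not : BForm ι → BForm ι
  | and : BForm ι → BForm ι → BForm ι
  | or : BForm ι → BForm ι → BForm ι

namespace BForm

variable {ι : Type}

/-- Evaluate a formula on an assignment. -/
def eval : BForm ι → (ι → Bool) → Bool
  | .const b, _ => b
  | .var i, v => v i
  | .not φ, v => !(φ.eval v)
  | .and φ ψ, v => φ.eval v && ψ.eval v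
  | .or φ ψ, v => φ.eval v || ψ.eval v

/-- The list of variable occurrences of a formula. -/
def varList : BForm ι → List ι
  | .const _ => []
  | .var i => [i]
  | .not φ => φ.varList
  | .and φ ψ => φ.varList ++ ψ.varList
  | .or φ ψ => φ.varList ++ ψ.varList

/-- Read-once: every variable occurs at most once. -/
def ReadOnce (φ : BForm ι) : Prop := φ.varList.Nodup

/-- Whether the formula contains an occurrence of a Boolean constant. -/
def HasConst : BForm ι → Prop
  | .const _ => True
  | .var _ => False
  | .not φ => φ.HasConst
  | .and φ ψ => φ.HasConst ∨ ψ.HasConst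
  | .or φ ψ => φ.HasConst ∨ ψ.HasConst

end BForm

open Classical

namespace DTree

variable {ι : Type}

/-- Substitute a variable by a constant in a decision tree. -/
noncomputable def restrict : DTree ι → ι → Bool → DTree ι
  | .leaf b, _, _ => .leaf b
  | .node j t f, i, b =>
    if j = i then (if b then t.restrict i b else f.restrict i b)
    else .node j (t.restrict i b) (f.restrict i b)

lemma eval_restrict (T : DTree ι) (i : ι) (b : Bool) (v : ι → Bool) :
    (T.restrict i b).eval v = T.eval (Function.update v i b) := by
  induction T with
  | leaf c => simp [restrict, eval]
  | node j t f iht ihf =>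
    by_cases h : j = i
    · subst h
      cases b <;> simp [restrict, eval, iht, ihf]
    · simp [restrict, h, eval, iht, ihf, Function.update_of_ne h]

lemma depth_restrict (T : DTree ι) (i : ι) (b : Bool) :
    (T.restrict i b).depth ≤ T.depth := by
  induction T with
  | leaf c => simp [restrict, depth]
  | node j t f iht ihf =>
    by_cases h : j = i
    · subst h
      cases b <;> simp [restrict, depth] <;> omega
    · simp [restrict, h, depth]; omega

end DTree

namespace BForm

variable {ι : Type}

lemma eval_congr (φ : BForm ι) {v w : ι → Bool}
    (h : ∀ j ∈ φ.varList, v j = w j) : φ.eval v = φ.eval w := by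
  induction φ with
  | const b => rfl
  | var i => exact h i (by simp [varList])
  | not φ ih => simp [eval, ih h]
  | and φ ψ ih1 ih2 =>
    simp only [eval]
    rw [ih1 fun j hj => h j (by simp [varList, hj]),
        ih2 fun j hj => h j (by simp [varList, hj])]
  | or φ ψ ih1 ih2 =>
    simp only [eval]
    rw [ih1 fun j hj => h j (by simp [varList, hj]),
        ih2 fun j hj => h j (by simp [varList, hj])]

lemma varList_ne_nil : ∀ (φ : BForm ι), ¬ φ.HasConst → φ.varList ≠ []
  | .const b, h => absurd trivial h
  | .var i, _ => by simp [varList]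
  | .not φ, h => varList_ne_nil φ h
  | .and φ ψ, h => by
      have := varList_ne_nil φ (fun hc => h (Or.inl hc))
      simp [varList]; intro h1 _; exact this h1
  | .or φ ψ, h => by
      have := varList_ne_nil φ (fun hc => h (Or.inl hc))
      simp [varList]; intro h1 _; exact this h1

lemma exists_eval : ∀ (φ : BForm ι), φ.ReadOnce → ¬ φ.HasConst →
    ∀ c : Bool, ∃ v, φ.eval v = c := by
  intro φ
  induction φ with
  | const b => intro _ hnc; exact absurd trivial hnc
  | var i => intro _ _ c; exact ⟨fun _ => c, rfl⟩
  | not φ ih =>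
    intro hro hnc c
    obtain ⟨v, hv⟩ := ih hro hnc (!c)
    exact ⟨v, by simp [eval, hv]⟩
  | and φ ψ ih1 ih2 =>
    intro hro hnc c
    rw [ReadOnce, varList, List.nodup_append] at hro
    obtain ⟨h1, h2, hd⟩ := hro
    have hnc1 : ¬ φ.HasConst := fun hc => hnc (Or.inl hc)
    have hnc2 : ¬ ψ.HasConst := fun hc => hnc (Or.inr hc)
    cases c with
    | false =>
      obtain ⟨v, hv⟩ := ih1 h1 hnc1 false
      exact ⟨v, by simp [eval, hv]⟩
    | true =>
      obtain ⟨v1, hv1⟩ := ih1 h1 hnc1 true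
      obtain ⟨v2, hv2⟩ := ih2 h2 hnc2 true
      refine ⟨fun j => if j ∈ φ.varList then v1 j else v2 j, ?_⟩
      have e1 : φ.eval (fun j => if j ∈ φ.varList then v1 j else v2 j) = φ.eval v1 :=
        eval_congr φ (fun j hj => by simp [hj])
      have e2 : ψ.eval (fun j => if j ∈ φ.varList then v1 j else v2 j) = ψ.eval v2 :=
        eval_congr ψ (fun j hj => by
          have : j ∉ φ.varList := fun hj' => hd j hj' j hj rfl
          simp [this])
      simp [eval, e1, e2, hv1, hv2]
  | or φ ψ ih1 ih2 =>
    intro hro hnc c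
    rw [ReadOnce, varList, List.nodup_append] at hro
    obtain ⟨h1, h2, hd⟩ := hro
    have hnc1 : ¬ φ.HasConst := fun hc => hnc (Or.inl hc)
    have hnc2 : ¬ ψ.HasConst := fun hc => hnc (Or.inr hc)
    cases c with
    | true =>
      obtain ⟨v, hv⟩ := ih1 h1 hnc1 true
      exact ⟨v, by simp [eval, hv]⟩
    | false =>
      obtain ⟨v1, hv1⟩ := ih1 h1 hnc1 false
      obtain ⟨v2, hv2⟩ := ih2 h2 hnc2 false
      refine ⟨fun j => if j ∈ φ.varList then v1 j else v2 j, ?_⟩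
      have e1 : φ.eval (fun j => if j ∈ φ.varList then v1 j else v2 j) = φ.eval v1 :=
        eval_congr φ (fun j hj => by simp [hj])
      have e2 : ψ.eval (fun j => if j ∈ φ.varList then v1 j else v2 j) = ψ.eval v2 :=
        eval_congr ψ (fun j hj => by
          have : j ∉ φ.varList := fun hj' => hd j hj' j hj rfl
          simp [this])
      simp [eval, e1, e2, hv1, hv2]

end BForm

namespace BForm

variable {ι : Type}

/-- If `i ∉ varList φ`, evaluation is independent of `v i`. -/
lemma eval_update (φ : BForm ι) {i : ι} (h : i ∉ φ.varList) (v : ι → Bool) (b : Bool) :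
    φ.eval (Function.update v i b) = φ.eval v :=
  eval_congr φ (fun j hj => Function.update_of_ne (fun e => by subst e; exact h hj) b v)

/-- Key lemma: in a read-once, constant-free formula with at least two variables,
any variable `i` can be fixed to some value `b` so that the restricted function is
computed by a read-once, constant-free formula on the remaining variables. -/
lemma key : ∀ (φ : BForm ι), φ.ReadOnce → ¬ φ.HasConst →
    ∀ i ∈ φ.varList, 2 ≤ φ.varList.length →
    ∃ (b : Bool) (ψ : BForm ι), ψ.ReadOnce ∧ ¬ ψ.HasConst ∧
      ψ.varList.length + 1 = φ.varList.length ∧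
      (∀ j ∈ ψ.varList, j ∈ φ.varList) ∧
      (∀ v, ψ.eval v = φ.eval (Function.update v i b)) := by
  intro φ
  induction φ with
  | const b => intro _ hnc; exact absurd trivial hnc
  | var j => intro _ _ i hi hlen; simp [varList] at hlen
  | not φ ih =>
    intro hro hnc i hi hlen
    obtain ⟨b, ψ, h1, h2, h3, h4, h5⟩ := ih hro hnc i hi hlen
    exact ⟨b, ψ.not, h1, h2, h3, h4, fun v => by simp [eval, h5 v]⟩
  | and φ₁ φ₂ ih1 ih2 =>
    intro hro hnc i hi hlen
    rw [ReadOnce, varList, List.nodup_append] at hro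
    obtain ⟨hn1, hn2, hd⟩ := hro
    have hnc1 : ¬ φ₁.HasConst := fun hc => hnc (Or.inl hc)
    have hnc2 : ¬ φ₂.HasConst := fun hc => hnc (Or.inr hc)
    rw [varList, List.mem_append] at hi
    rcases hi with hi | hi
    · -- i occurs in the left subformula
      have hi2 : i ∉ φ₂.varList := fun h => hd i hi i h rfl
      by_cases hone : φ₁.varList.length = 1
      · -- φ₁ has only the variable i; force φ₁ to true
        obtain ⟨a, ha⟩ := List.length_eq_one_iff.mp hone
        have hia : i = a := by rw [ha] at hi; simpa using hi
        subst hia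
        obtain ⟨v₀, hv₀⟩ := exists_eval φ₁ hn1 hnc1 true
        refine ⟨v₀ i, φ₂, hn2, hnc2, ?_, ?_, ?_⟩
        · simp only [varList, ha, List.length_append, List.length_cons, List.length_nil]; try omega
        · intro j hj; simp [varList, hj]
        · intro v
          have e1 : φ₁.eval (Function.update v i (v₀ i)) = φ₁.eval v₀ :=
            eval_congr φ₁ (fun j hj => by
              rw [ha] at hj; simp at hj; subst hj; simp)
          have e2 : φ₂.eval (Function.update v i (v₀ i)) = φ₂.eval v :=
            eval_update φ₂ hi2 v _
          simp [eval, e1, e2, hv₀]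
      · have hlen1 : 2 ≤ φ₁.varList.length := by
          have : 1 ≤ φ₁.varList.length := List.length_pos_iff.mpr (fun h => by simp [h] at hi)
          omega
        obtain ⟨b, ψ₁, h1, h2, h3, h4, h5⟩ := ih1 hn1 hnc1 i hi hlen1
        refine ⟨b, ψ₁.and φ₂, ?_, ?_, ?_, ?_, ?_⟩
        · rw [ReadOnce, varList, List.nodup_append]
          exact ⟨h1, hn2, fun a ha b hb => hd a (h4 a ha) b hb⟩
        · rintro (hc | hc); exact h2 hc; exact hnc2 hc
        · simp [varList]; omega
        · intro j hj; rw [varList, List.mem_append] at hj ⊢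
          rcases hj with hj | hj
          · exact Or.inl (h4 j hj)
          · exact Or.inr hj
        · intro v
          have e2 : φ₂.eval (Function.update v i b) = φ₂.eval v :=
            eval_update φ₂ hi2 v b
          simp [eval, h5 v, e2]
    · -- i occurs in the right subformula
      have hi1 : i ∉ φ₁.varList := fun h => hd i h i hi rfl
      by_cases hone : φ₂.varList.length = 1
      · obtain ⟨a, ha⟩ := List.length_eq_one_iff.mp hone
        have hia : i = a := by rw [ha] at hi; simpa using hi
        subst hia
        obtain ⟨v₀, hv₀⟩ := exists_eval φ₂ hn2 hnc2 true
        refine ⟨v₀ i, φ₁, hn1, hnc1, ?_, ?_, ?_⟩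
        · simp only [varList, ha, List.length_append, List.length_cons, List.length_nil]; try omega
        · intro j hj; simp [varList, hj]
        · intro v
          have e2 : φ₂.eval (Function.update v i (v₀ i)) = φ₂.eval v₀ :=
            eval_congr φ₂ (fun j hj => by
              rw [ha] at hj; simp at hj; subst hj; simp)
          have e1 : φ₁.eval (Function.update v i (v₀ i)) = φ₁.eval v :=
            eval_update φ₁ hi1 v _
          simp [eval, e1, e2, hv₀]
      · have hlen2 : 2 ≤ φ₂.varList.length := by
          have : 1 ≤ φ₂.varList.length := List.length_pos_iff.mpr (fun h => by simp [h] at hi)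
          omega
        obtain ⟨b, ψ₂, h1, h2, h3, h4, h5⟩ := ih2 hn2 hnc2 i hi hlen2
        refine ⟨b, φ₁.and ψ₂, ?_, ?_, ?_, ?_, ?_⟩
        · rw [ReadOnce, varList, List.nodup_append]
          exact ⟨hn1, h1, fun a ha b hb => hd a ha b (h4 b hb)⟩
        · rintro (hc | hc); exact hnc1 hc; exact h2 hc
        · simp [varList]; omega
        · intro j hj; rw [varList, List.mem_append] at hj ⊢
          rcases hj with hj | hj
          · exact Or.inl hj
          · exact Or.inr (h4 j hj)
        · intro v
          have e1 : φ₁.eval (Function.update v i b) = φ₁.eval v :=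
            eval_update φ₁ hi1 v b
          simp [eval, h5 v, e1]
  | or φ₁ φ₂ ih1 ih2 =>
    intro hro hnc i hi hlen
    rw [ReadOnce, varList, List.nodup_append] at hro
    obtain ⟨hn1, hn2, hd⟩ := hro
    have hnc1 : ¬ φ₁.HasConst := fun hc => hnc (Or.inl hc)
    have hnc2 : ¬ φ₂.HasConst := fun hc => hnc (Or.inr hc)
    rw [varList, List.mem_append] at hi
    rcases hi with hi | hi
    · have hi2 : i ∉ φ₂.varList := fun h => hd i hi i h rfl
      by_cases hone : φ₁.varList.length = 1
      · obtain ⟨a, ha⟩ := List.length_eq_one_iff.mp hone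
        have hia : i = a := by rw [ha] at hi; simpa using hi
        subst hia
        obtain ⟨v₀, hv₀⟩ := exists_eval φ₁ hn1 hnc1 false
        refine ⟨v₀ i, φ₂, hn2, hnc2, ?_, ?_, ?_⟩
        · simp only [varList, ha, List.length_append, List.length_cons, List.length_nil]; try omega
        · intro j hj; simp [varList, hj]
        · intro v
          have e1 : φ₁.eval (Function.update v i (v₀ i)) = φ₁.eval v₀ :=
            eval_congr φ₁ (fun j hj => by
              rw [ha] at hj; simp at hj; subst hj; simp)
          have e2 : φ₂.eval (Function.update v i (v₀ i)) = φ₂.eval v :=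
            eval_update φ₂ hi2 v _
          simp [eval, e1, e2, hv₀]
      · have hlen1 : 2 ≤ φ₁.varList.length := by
          have : 1 ≤ φ₁.varList.length := List.length_pos_iff.mpr (fun h => by simp [h] at hi)
          omega
        obtain ⟨b, ψ₁, h1, h2, h3, h4, h5⟩ := ih1 hn1 hnc1 i hi hlen1
        refine ⟨b, ψ₁.or φ₂, ?_, ?_, ?_, ?_, ?_⟩
        · rw [ReadOnce, varList, List.nodup_append]
          exact ⟨h1, hn2, fun a ha b hb => hd a (h4 a ha) b hb⟩
        · rintro (hc | hc); exact h2 hc; exact hnc2 hc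
        · simp [varList]; omega
        · intro j hj; rw [varList, List.mem_append] at hj ⊢
          rcases hj with hj | hj
          · exact Or.inl (h4 j hj)
          · exact Or.inr hj
        · intro v
          have e2 : φ₂.eval (Function.update v i b) = φ₂.eval v :=
            eval_update φ₂ hi2 v b
          simp [eval, h5 v, e2]
    · have hi1 : i ∉ φ₁.varList := fun h => hd i h i hi rfl
      by_cases hone : φ₂.varList.length = 1
      · obtain ⟨a, ha⟩ := List.length_eq_one_iff.mp hone
        have hia : i = a := by rw [ha] at hi; simpa using hi
        subst hia
        obtain ⟨v₀, hv₀⟩ := exists_eval φ₂ hn2 hnc2 false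
        refine ⟨v₀ i, φ₁, hn1, hnc1, ?_, ?_, ?_⟩
        · simp only [varList, ha, List.length_append, List.length_cons, List.length_nil]; try omega
        · intro j hj; simp [varList, hj]
        · intro v
          have e2 : φ₂.eval (Function.update v i (v₀ i)) = φ₂.eval v₀ :=
            eval_congr φ₂ (fun j hj => by
              rw [ha] at hj; simp at hj; subst hj; simp)
          have e1 : φ₁.eval (Function.update v i (v₀ i)) = φ₁.eval v :=
            eval_update φ₁ hi1 v _
          simp [eval, e1, e2, hv₀]
      · have hlen2 : 2 ≤ φ₂.varList.length := by
          have : 1 ≤ φ₂.varList.length := List.length_pos_iff.mpr (fun h => by simp [h] at hi)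
          omega
        obtain ⟨b, ψ₂, h1, h2, h3, h4, h5⟩ := ih2 hn2 hnc2 i hi hlen2
        refine ⟨b, φ₁.or ψ₂, ?_, ?_, ?_, ?_, ?_⟩
        · rw [ReadOnce, varList, List.nodup_append]
          exact ⟨hn1, h1, fun a ha b hb => hd a ha b (h4 b hb)⟩
        · rintro (hc | hc); exact hnc1 hc; exact h2 hc
        · simp [varList]; omega
        · intro j hj; rw [varList, List.mem_append] at hj ⊢
          rcases hj with hj | hj
          · exact Or.inl hj
          · exact Or.inr (h4 j hj)
        · intro v
          have e1 : φ₁.eval (Function.update v i b) = φ₁.eval v :=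
            eval_update φ₁ hi1 v b
          simp [eval, h5 v, e1]

end BForm

/-- Lower bound: any decision tree computing a read-once constant-free
formula must have depth at least the number of variables. -/
lemma lower_bound {ι : Type} :
    ∀ (n : ℕ) (T : DTree ι), T.depth ≤ n → ∀ φ : BForm ι, φ.ReadOnce →
      ¬ φ.HasConst → T.Computes φ.eval → φ.varList.length ≤ T.depth := by
  intro n
  induction n with
  | zero =>
    intro T hT φ hro hnc hc
    cases T with
    | leaf b =>
      obtain ⟨v, hv⟩ := BForm.exists_eval φ hro hnc (!b)
      have := hc v
      simp [DTree.eval, hv] at this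
    | node i t f => simp [DTree.depth] at hT
  | succ m ih =>
    intro T hT φ hro hnc hc
    cases T with
    | leaf b =>
      obtain ⟨v, hv⟩ := BForm.exists_eval φ hro hnc (!b)
      have := hc v
      simp [DTree.eval, hv] at this
    | node i t f =>
      rw [DTree.depth] at hT ⊢
      by_cases hi : i ∈ φ.varList
      · rcases Nat.lt_or_ge φ.varList.length 2 with hsmall | hbig
        · have : 1 ≤ φ.varList.length :=
            List.length_pos_iff.mpr (BForm.varList_ne_nil φ hnc)
          omega
        · obtain ⟨b, ψ, h1, h2, h3, _, h5⟩ := BForm.key φ hro hnc i hi hbig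
          set tb := if b then t else f with htb
          have hcomp : (tb.restrict i b).Computes ψ.eval := by
            intro v
            rw [DTree.eval_restrict, h5 v]
            have := hc (Function.update v i b)
            rw [← this, DTree.eval]
            cases b <;> simp [htb]
          have hdep : (tb.restrict i b).depth ≤ m := by
            have := DTree.depth_restrict tb i b
            have : tb.depth ≤ max t.depth f.depth := by
              cases b <;> simp [htb]
            have := DTree.depth_restrict tb i b
            omega
          have := ih (tb.restrict i b) hdep ψ h1 h2 hcomp
          have h2' : (tb.restrict i b).depth ≤ max t.depth f.depth := by
            have := DTree.depth_restrict tb i b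
            have : tb.depth ≤ max t.depth f.depth := by
              cases b <;> simp [htb]
            have := DTree.depth_restrict tb i b
            omega
          omega
      · have hcomp : (t.restrict i true).Computes φ.eval := by
          intro v
          rw [DTree.eval_restrict]
          have := hc (Function.update v i true)
          rw [← BForm.eval_update φ hi v true, ← this, DTree.eval]
          simp
        have hdep : (t.restrict i true).depth ≤ m := by
          have := DTree.depth_restrict t i true
          omega
        have := ih (t.restrict i true) hdep φ hro hnc hcomp
        have := DTree.depth_restrict t i true
        omega

namespace DTree

/-- The full decision tree querying all variables in a list. -/
noncomputable def fullTree {ι : Type} : List ι → ((ι → Bool) → Bool) → DTree ι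
  | [], g => .leaf (g (fun _ => false))
  | i :: l, g => .node i (fullTree l (fun v => g (Function.update v i true)))
      (fullTree l (fun v => g (Function.update v i false)))

lemma fullTree_depth {ι : Type} : ∀ (l : List ι) (g : (ι → Bool) → Bool),
    (fullTree l g).depth = l.length := by
  intro l
  induction l with
  | nil => intro g; simp [fullTree, depth]
  | cons i l ih => intro g; simp [fullTree, depth, ih]; omega

lemma fullTree_computes {ι : Type} : ∀ (l : List ι) (g : (ι → Bool) → Bool),
    (∀ v w : ι → Bool, (∀ j ∈ l, v j = w j) → g v = g w) →
    (fullTree l g).Computes g := by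
  intro l
  induction l with
  | nil => intro g hg v; exact hg _ v (by simp)
  | cons i l ih =>
    intro g hg v
    simp only [fullTree, eval]
    cases hv : v i with
    | true =>
      simp only [if_pos rfl]
      have h1 : (∀ v w : ι → Bool, (∀ j ∈ l, v j = w j) →
          g (Function.update v i true) = g (Function.update w i true)) := by
        intro v w h
        apply hg
        intro j hj
        rcases eq_or_ne j i with rfl | hne
        · simp
        · simp only [Function.update_of_ne hne]
          exact h j (by simp at hj; tauto)
      have := ih _ h1 v
      rw [this]
      have : Function.update v i true = v := by
        funext j
        rcases eq_or_ne j i with rfl | hne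
        · simp [hv]
        · simp [Function.update_of_ne hne]
      rw [this]
      try simp
    | false =>
      simp only [hv, if_neg Bool.false_ne_true]
      have h1 : (∀ v w : ι → Bool, (∀ j ∈ l, v j = w j) →
          g (Function.update v i false) = g (Function.update w i false)) := by
        intro v w h
        apply hg
        intro j hj
        rcases eq_or_ne j i with rfl | hne
        · simp
        · simp only [Function.update_of_ne hne]
          exact h j (by simp at hj; tauto)
      have := ih _ h1 v
      rw [this]
      have : Function.update v i false = v := by
        funext j
        rcases eq_or_ne j i with rfl | hne
        · simp [hv]
        · simp [Function.update_of_ne hne]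
      rw [this]
      try simp

end DTree


/-- Every non-simplifiable read-once Boolean formula is evasive: if `φ` is
read-once, non-constant, and contains no occurrence of a Boolean constant, then
its decision-tree depth equals its number of variables. -/
theorem readOnce_evasive {ι : Type} (φ : BForm ι)
    (hro : φ.ReadOnce) (hnc : ¬ φ.HasConst)
    (hconst : ¬ ∃ c : Bool, ∀ v, φ.eval v = c) :
    Ddepth φ.eval = φ.varList.length := by
  have hmem : φ.varList.length ∈ {d | ∃ T : DTree ι, T.Computes φ.eval ∧ T.depth = d} := by
    refine ⟨DTree.fullTree φ.varList φ.eval, ?_, DTree.fullTree_depth _ _⟩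
    exact DTree.fullTree_computes _ _ (fun v w h => BForm.eval_congr φ h)
  refine le_antisymm (Nat.sInf_le hmem) (le_csInf ⟨_, hmem⟩ ?_)
  rintro d ⟨T, hc, rfl⟩
  exact lower_bound T.depth T le_rfl φ hro hnc hc
end

section
/- The path-shaped monotone graph 2-DNF ψ_n = (x_0 ∧ x_1) ∨ (x_1 ∧ x_2) ∨ ⋯ ∨ (x_{n−1} ∧ x_n) on n+1 variables is non-evasive when n is divisible by 3; in particular for every n with 3 ∣ n and n ≥ 3, D(ψ_n) ≤ n (strictly less than the number of variables n+1). -/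
/-- The path-shaped monotone graph 2-DNF
`ψₙ = (x₀ ∧ x₁) ∨ (x₁ ∧ x₂) ∨ ⋯ ∨ (x_{n-1} ∧ xₙ)` on `n + 1` variables. -/
def pathDNF (n : ℕ) (v : Fin (n + 1) → Bool) : Bool :=
  decide (∃ i : Fin n, v i.castSucc = true ∧ v i.succ = true)

namespace PathProof

open DTree

lemma bool_eq_of_iff {a b : Bool} (h : a = true ↔ b = true) : a = b := by
  cases a <;> cases b <;> simp_all

def P (s n : ℕ) (v : ℕ → Bool) : Bool :=
  decide (∃ i : Fin n, v (s + i) = true ∧ v (s + i + 1) = true)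

lemma P_iff (s n : ℕ) (v : ℕ → Bool) :
    P s n v = true ↔ ∃ i, s ≤ i ∧ i < s + n ∧ v i = true ∧ v (i+1) = true := by
  simp only [P, decide_eq_true_eq]
  constructor
  · rintro ⟨i, h1, h2⟩
    exact ⟨s + i, by omega, by omega, h1, h2⟩
  · rintro ⟨i, h1, h2, h3, h4⟩
    refine ⟨⟨i - s, by omega⟩, ?_⟩
    have : s + (i - s) = i := by omega
    simp only [this]
    exact ⟨h3, h4⟩

def fullT (F : (ℕ → Bool) → Bool) : List ℕ → DTree ℕ
  | [] => .leaf (F fun _ => false)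
  | i :: l => .node i (fullT (fun v => F (Function.update v i true)) l)
                      (fullT (fun v => F (Function.update v i false)) l)

lemma fullT_depth (F : (ℕ → Bool) → Bool) (l : List ℕ) :
    (fullT F l).depth = l.length := by
  induction l generalizing F with
  | nil => rfl
  | cons i l ih => simp [fullT, DTree.depth, ih]; omega

lemma fullT_eval (F : (ℕ → Bool) → Bool) (l : List ℕ)
    (h : ∀ v w, (∀ i ∈ l, v i = w i) → F v = F w) (v : ℕ → Bool) :
    (fullT F l).eval v = F v := by
  induction l generalizing F with
  | nil => exact (h _ _ (by simp)).symm
  | cons i l ih =>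
    have hdep : ∀ b : Bool, ∀ w w' : ℕ → Bool, (∀ j ∈ l, w j = w' j) →
        F (Function.update w i b) = F (Function.update w' i b) := by
      intro b w w' hw
      refine h _ _ (fun j hj => ?_)
      rcases eq_or_ne j i with rfl | hne
      · simp
      · rw [Function.update_of_ne hne, Function.update_of_ne hne]
        exact hw j ((List.mem_cons.mp hj).resolve_left hne)
    have key : ∀ b : Bool,
        (fullT (fun w => F (Function.update w i b)) l).eval v
          = F (Function.update v i b) := fun b => ih _ (hdep b)
    have e : (fullT F (i :: l)).eval v
        = if v i = true then (fullT (fun w => F (Function.update w i true)) l).eval v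
          else (fullT (fun w => F (Function.update w i false)) l).eval v := rfl
    rw [e]
    cases hv : v i
    · rw [if_neg (by simp), key false, ← hv, Function.update_eq_self]
    · rw [if_pos rfl, key true, ← hv, Function.update_eq_self]

def pathT : ℕ → ℕ → DTree ℕ
  | 0, _ => .leaf false
  | k+1, s => .node (s+1)
      (.node s (.leaf true) (.node (s+2) (.leaf true) (pathT k (s+3))))
      (fullT (fun v => P (s+2) (3*k+1) v) (List.range' (s+2) (3*k+2)))

lemma pathT_depth (k s : ℕ) : (pathT k s).depth ≤ 3 * k := by
  induction k generalizing s with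
  | zero => simp [pathT, DTree.depth]
  | succ k ih =>
    have := ih (s+3)
    simp only [pathT, DTree.depth, fullT_depth, List.length_range']
    omega

lemma pathT_eval (k s : ℕ) (v : ℕ → Bool) :
    (pathT k s).eval v = P s (3 * k) v := by
  induction k generalizing s with
  | zero =>
    apply bool_eq_of_iff
    simp only [pathT, DTree.eval, P_iff]
    constructor
    · intro h; cases h
    · rintro ⟨i, h1, h2, -⟩; omega
  | succ k ih =>
    have e : (pathT (k+1) s).eval v
        = if v (s+1) = true then
            (if v s = true then true
             else if v (s+2) = true then true else (pathT k (s+3)).eval v)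
          else (fullT (fun v => P (s+2) (3*k+1) v) (List.range' (s+2) (3*k+2))).eval v := rfl
    rw [e]
    cases h1 : v (s+1)
    · -- x_{s+1} = false : exhaustive on [s+2, s+3k+3]
      have hdep : ∀ w w' : ℕ → Bool,
          (∀ i ∈ List.range' (s+2) (3*k+2), w i = w' i) →
          P (s+2) (3*k+1) w = P (s+2) (3*k+1) w' := by
        intro w w' hw
        have hmem : ∀ j, s + 2 ≤ j → j ≤ s + 2 + (3*k+1) → w j = w' j := by
          intro j hj1 hj2
          apply hw
          rw [List.mem_range'_1]
          omega
        apply bool_eq_of_iff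
        rw [P_iff, P_iff]
        constructor
        · rintro ⟨i, ha, hb, hc, hd⟩
          exact ⟨i, ha, hb, by rw [← hmem i (by omega) (by omega)]; exact hc,
            by rw [← hmem (i+1) (by omega) (by omega)]; exact hd⟩
        · rintro ⟨i, ha, hb, hc, hd⟩
          exact ⟨i, ha, hb, by rw [hmem i (by omega) (by omega)]; exact hc,
            by rw [hmem (i+1) (by omega) (by omega)]; exact hd⟩
      rw [if_neg (by simp),
        fullT_eval (fun v => P (s+2) (3*k+1) v) (List.range' (s+2) (3*k+2)) hdep v]
      apply bool_eq_of_iff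
      rw [P_iff, P_iff]
      constructor
      · rintro ⟨i, ha, hb, hc, hd⟩
        exact ⟨i, by omega, by omega, hc, hd⟩
      · rintro ⟨i, ha, hb, hc, hd⟩
        have hcase : i = s ∨ i = s + 1 ∨ s + 2 ≤ i := by omega
        rcases hcase with rfl | rfl | hge
        · simp [h1] at hd
        · simp [h1] at hc
        · exact ⟨i, by omega, by omega, hc, hd⟩
    · -- x_{s+1} = true
      rw [if_pos rfl]
      cases h0 : v s
      · rw [if_neg (by simp)]
        cases h2 : v (s+2)
        · rw [if_neg (by simp), ih]
          apply bool_eq_of_iff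
          rw [P_iff, P_iff]
          constructor
          · rintro ⟨i, ha, hb, hc, hd⟩
            exact ⟨i, by omega, by omega, hc, hd⟩
          · rintro ⟨i, ha, hb, hc, hd⟩
            have hcase : i = s ∨ i = s + 1 ∨ i = s + 2 ∨ s + 3 ≤ i := by omega
            rcases hcase with rfl | rfl | rfl | hge
            · simp [h0] at hc
            · simp [h2] at hd
            · simp [h2] at hc
            · exact ⟨i, by omega, by omega, hc, hd⟩
        · rw [if_pos rfl]
          symm
          rw [P_iff]
          exact ⟨s + 1, by omega, by omega, h1, h2⟩
      · rw [if_pos rfl]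
        symm
        rw [P_iff]
        exact ⟨s, by omega, by omega, h0, h1⟩

def mapT {κ : Type} (g : ℕ → κ) : DTree ℕ → DTree κ
  | .leaf b => .leaf b
  | .node i t f => .node (g i) (mapT g t) (mapT g f)

lemma mapT_eval {κ : Type} (g : ℕ → κ) (T : DTree ℕ) (v : κ → Bool) :
    (mapT g T).eval v = T.eval (fun i => v (g i)) := by
  induction T with
  | leaf b => rfl
  | node i t f iht ihf => simp [mapT, DTree.eval, iht, ihf]

lemma mapT_depth {κ : Type} (g : ℕ → κ) (T : DTree ℕ) :
    (mapT g T).depth = T.depth := by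
  induction T with
  | leaf b => rfl
  | node i t f iht ihf => simp [mapT, DTree.depth, iht, ihf]


end PathProof

open PathProof in
/-- If `3 ∣ n` (and `n ≥ 3`), the path DNF `ψₙ` is non-evasive:
`D(ψₙ) ≤ n`, strictly less than its `n + 1` variables. -/
theorem pathDNF_nonevasive (n : ℕ) (hdvd : 3 ∣ n) (hn : 3 ≤ n) :
    Ddepth (pathDNF n) ≤ n := by
  obtain ⟨k, rfl⟩ := hdvd
  set g : ℕ → Fin (3*k+1) := fun j => if h : j < 3*k+1 then ⟨j, h⟩ else ⟨0, by omega⟩ with hgdef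
  have hgeq : ∀ (j : ℕ) (h : j < 3*k+1), g j = ⟨j, h⟩ := by
    intro j h
    simp [hgdef, dif_pos h]
    rw [dif_pos (by omega)]
  have hcomp : (mapT g (pathT k 0)).Computes (pathDNF (3*k)) := by
    intro v
    rw [mapT_eval, pathT_eval]
    apply bool_eq_of_iff
    rw [P_iff]
    simp only [pathDNF, decide_eq_true_eq]
    constructor
    · rintro ⟨i, h1, h2, h3, h4⟩
      refine ⟨⟨i, by omega⟩, ?_, ?_⟩
      · rw [hgeq i (by omega)] at h3
        convert h3 using 2
        rfl
      · rw [hgeq (i+1) (by omega)] at h4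
        convert h4 using 2
        rfl
    · rintro ⟨i, h3, h4⟩
      refine ⟨(i : ℕ), by omega, by have := i.isLt; omega, ?_, ?_⟩
      · rw [hgeq (i : ℕ) (by have := i.isLt; omega)]
        convert h3 using 2
        rfl
      · rw [hgeq ((i : ℕ) + 1) (by have := i.isLt; omega)]
        convert h4 using 2
        rfl
  have hmem : (mapT g (pathT k 0)).depth ∈
      {d | ∃ T : DTree (Fin (3*k+1)), T.Computes (pathDNF (3*k)) ∧ T.depth = d} :=
    ⟨_, hcomp, rfl⟩
  refine le_trans (Nat.sInf_le hmem) ?_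
  rw [mapT_depth]
  exact pathT_depth k 0
end

section
/- With ψ_i defined by ψ_0 = (w ∧ x) ∨ (x ∧ y) ∨ (y ∧ z) and ψ_{i+1} = (u_i ∧ ψ_i) ∨ (u_i ∧ v_i) ∨ (v_i ∧ ψ'_i) (with u_i, v_i fresh and ψ'_i a variable-disjoint copy of ψ_i), the decision-tree depth satisfies D(ψ_{i+1}) ≤ 2 + max(D(ψ_i), D(ψ'_i)) ; consequently D(ψ_i) ≤ 2i + 3 = O(log of the number of variables of ψ_i). -/
/-- Shift all variables of a formula over `ℕ` up by `k` (used to create a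
variable-disjoint copy). -/
def BForm.shift (k : ℕ) : BForm ℕ → BForm ℕ
  | .const b => .const b
  | .var i => .var (i + k)
  | .not φ => .not (φ.shift k)
  | .and φ ψ => .and (φ.shift k) (ψ.shift k)
  | .or φ ψ => .or (φ.shift k) (ψ.shift k)

/-- `nv i` is the number of variables of `ψᵢ`: `nv 0 = 4`,
`nv (i+1) = 2 * nv i + 2`. -/
def nv : ℕ → ℕ
  | 0 => 4
  | i + 1 => 2 * nv i + 2

/-- The family `ψᵢ` : `ψ₀ = (w ∧ x) ∨ (x ∧ y) ∨ (y ∧ z)` on variables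
`0,1,2,3`, and `ψᵢ₊₁ = (uᵢ ∧ ψᵢ) ∨ (uᵢ ∧ vᵢ) ∨ (vᵢ ∧ ψ'ᵢ)` where `ψ'ᵢ` is a
fresh copy of `ψᵢ` (shifted by `nv i`) and `uᵢ, vᵢ` are the fresh variables
`2 * nv i` and `2 * nv i + 1`. -/
def psiFam : ℕ → BForm ℕ
  | 0 =>
      .or (.or (.and (.var 0) (.var 1)) (.and (.var 1) (.var 2)))
        (.and (.var 2) (.var 3))
  | i + 1 =>
      .or
        (.or (.and (.var (2 * nv i)) (psiFam i))
          (.and (.var (2 * nv i)) (.var (2 * nv i + 1))))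
        (.and (.var (2 * nv i + 1)) ((psiFam i).shift (nv i)))

/-! Query `u` and then `w`: the switch `(u ∧ f) ∨ (u ∧ w) ∨ (w ∧ g)` is settled when both or
neither are true, and reduces to `f` or to `g` otherwise, so two queries followed by an optimal tree
for `f` or `g` compute it. `ψ₀ = (w ∧ x) ∨ (x ∧ y) ∨ (y ∧ z)` is itself the switch on `x, y` with
single-variable branches, hence `D(ψ₀) ≤ 3`; since renaming variables cannot increase the depth,
`D(ψ'ᵢ) ≤ D(ψᵢ)` and induction gives `D(ψᵢ) ≤ 2i + 3`. -/

namespace DTree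

variable {ι ι' : Type}

def graft : DTree ι → (Bool → DTree ι) → DTree ι
  | .leaf b, g => g b
  | .node i t f, g => .node i (t.graft g) (f.graft g)

theorem eval_graft (T : DTree ι) (g : Bool → DTree ι) (v : ι → Bool) :
    (T.graft g).eval v = (g (T.eval v)).eval v := by
  induction T with
  | leaf b => rfl
  | node i t f iht ihf => cases h : v i <;> simp [graft, eval, h, iht, ihf]

def rename (g : ι → ι') : DTree ι → DTree ι'
  | .leaf b => .leaf b
  | .node i t f => .node (g i) (t.rename g) (f.rename g)

theorem eval_rename (g : ι → ι') (T : DTree ι) (v : ι' → Bool) :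
    (T.rename g).eval v = T.eval (v ∘ g) := by
  induction T with
  | leaf b => rfl
  | node i t f iht ihf => simp [rename, eval, iht, ihf]

theorem depth_rename (g : ι → ι') (T : DTree ι) : (T.rename g).depth = T.depth := by
  induction T with
  | leaf b => rfl
  | node i t f iht ihf => simp [rename, depth, iht, ihf]

theorem Computes.Ddepth_le {T : DTree ι} {f : (ι → Bool) → Bool} (h : T.Computes f) :
    Ddepth f ≤ T.depth :=
  Nat.sInf_le ⟨T, h, rfl⟩

end DTree

section Ddepth

variable {ι ι' : Type}

/-- Without a computing tree, `Ddepth f` is the junk value `sInf ∅ = 0`. -/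
theorem exists_computes_depth_eq_Ddepth {f : (ι → Bool) → Bool}
    (hf : ∃ T : DTree ι, T.Computes f) :
    ∃ T : DTree ι, T.Computes f ∧ T.depth = Ddepth f :=
  let ⟨T, hT⟩ := hf
  Nat.sInf_mem (s := {d | ∃ T : DTree ι, T.Computes f ∧ T.depth = d}) ⟨T.depth, T, hT, rfl⟩

theorem Ddepth_comp_le (g : ι → ι') {f : (ι → Bool) → Bool}
    (hf : ∃ T : DTree ι, T.Computes f) :
    Ddepth (fun v : ι' → Bool => f (v ∘ g)) ≤ Ddepth f := by
  obtain ⟨T, hT, hdepth⟩ := exists_computes_depth_eq_Ddepth hf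
  have hcomputes : (T.rename g).Computes fun v => f (v ∘ g) := fun v => by
    rw [DTree.eval_rename, hT]
  simpa [DTree.depth_rename, hdepth] using hcomputes.Ddepth_le

theorem Ddepth_apply_le_one (i : ι) : Ddepth (fun v : ι → Bool => v i) ≤ 1 := by
  have hcomputes : (DTree.node i (.leaf true) (.leaf false)).Computes (fun v => v i) := fun v => by
    cases h : v i <;> simp [DTree.eval, h]
  simpa [DTree.depth] using hcomputes.Ddepth_le

def switch (u w : ι) (f g : (ι → Bool) → Bool) (v : ι → Bool) : Bool :=
  v u && f v || v u && v w || v w && g v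

theorem Ddepth_switch_le (u w : ι) {f g : (ι → Bool) → Bool}
    (hf : ∃ T : DTree ι, T.Computes f) (hg : ∃ T : DTree ι, T.Computes g) :
    Ddepth (switch u w f g) ≤ 2 + max (Ddepth f) (Ddepth g) := by
  obtain ⟨Tf, hTf, hdepth_f⟩ := exists_computes_depth_eq_Ddepth hf
  obtain ⟨Tg, hTg, hdepth_g⟩ := exists_computes_depth_eq_Ddepth hg
  have hcomputes : (DTree.node u (.node w (.leaf true) Tf) (.node w Tg (.leaf false))).Computes
      (switch u w f g) := fun v => by
    cases hu : v u <;> cases hw : v w <;> simp [DTree.eval, switch, hu, hw, hTf v, hTg v]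
  refine hcomputes.Ddepth_le.trans ?_
  simp only [DTree.depth]
  omega

end Ddepth

namespace BForm

variable {ι : Type}

def toTree : BForm ι → DTree ι
  | .const b => .leaf b
  | .var i => .node i (.leaf true) (.leaf false)
  | .not φ => φ.toTree.graft fun b => .leaf (!b)
  | .and φ ψ => φ.toTree.graft fun b => if b then ψ.toTree else .leaf false
  | .or φ ψ => φ.toTree.graft fun b => if b then .leaf true else ψ.toTree

theorem toTree_computes (φ : BForm ι) : φ.toTree.Computes φ.eval := by
  induction φ with
  | const b => intro v; rfl
  | var i => intro v; cases h : v i <;> simp [toTree, DTree.eval, eval, h]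
  | not φ ih => intro v; simp [toTree, DTree.eval_graft, ih v, eval, DTree.eval]
  | and φ ψ ihφ ihψ =>
      intro v
      cases h : φ.eval v <;> simp [toTree, DTree.eval_graft, ihφ v, eval, h, ihψ v, DTree.eval]
  | or φ ψ ihφ ihψ =>
      intro v
      cases h : φ.eval v <;> simp [toTree, DTree.eval_graft, ihφ v, eval, h, ihψ v, DTree.eval]

theorem exists_computes (φ : BForm ι) : ∃ T : DTree ι, T.Computes φ.eval :=
  ⟨φ.toTree, φ.toTree_computes⟩

theorem eval_shift (k : ℕ) (φ : BForm ℕ) :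
    (φ.shift k).eval = fun v => φ.eval (v ∘ (· + k)) := by
  funext v
  induction φ with
  | const b => rfl
  | var i => rfl
  | not φ ih => simp [shift, eval, ih]
  | and φ ψ ihφ ihψ => simp [shift, eval, ihφ, ihψ]
  | or φ ψ ihφ ihψ => simp [shift, eval, ihφ, ihψ]

theorem Ddepth_shift_le (k : ℕ) (φ : BForm ℕ) : Ddepth (φ.shift k).eval ≤ Ddepth φ.eval := by
  rw [eval_shift]
  exact Ddepth_comp_le _ φ.exists_computes

end BForm

theorem psiFam_zero_eval :
    (psiFam 0).eval = switch 1 2 (fun v => v 0) (fun v => v 3) := by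
  funext v
  simp only [psiFam, BForm.eval, switch, Bool.and_comm (v 0)]

theorem psiFam_succ_eval (i : ℕ) :
    (psiFam (i + 1)).eval =
      switch (2 * nv i) (2 * nv i + 1) (psiFam i).eval ((psiFam i).shift (nv i)).eval :=
  rfl

theorem Ddepth_psiFam_zero_le : Ddepth (psiFam 0).eval ≤ 3 := by
  rw [psiFam_zero_eval]
  refine (Ddepth_switch_le 1 2 (BForm.var 0).exists_computes (BForm.var 3).exists_computes).trans ?_
  have h0 : Ddepth (BForm.var 0 : BForm ℕ).eval ≤ 1 := Ddepth_apply_le_one 0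
  have h3 : Ddepth (BForm.var 3 : BForm ℕ).eval ≤ 1 := Ddepth_apply_le_one 3
  omega

theorem Ddepth_psiFam_succ_le (i : ℕ) :
    Ddepth (psiFam (i + 1)).eval ≤
      2 + max (Ddepth (psiFam i).eval) (Ddepth ((psiFam i).shift (nv i)).eval) := by
  rw [psiFam_succ_eval]
  exact Ddepth_switch_le _ _ (psiFam i).exists_computes ((psiFam i).shift (nv i)).exists_computes

/-- `D(ψᵢ₊₁) ≤ 2 + max (D(ψᵢ)) (D(ψ'ᵢ))`, and consequently
`D(ψᵢ) ≤ 2 * i + 3`, which is logarithmic in the number of variables of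
`ψᵢ`. -/
theorem psiFam_depth :
    (∀ i : ℕ,
        Ddepth (psiFam (i + 1)).eval ≤
          2 + max (Ddepth (psiFam i).eval) (Ddepth ((psiFam i).shift (nv i)).eval)) ∧
      ∀ i : ℕ, Ddepth (psiFam i).eval ≤ 2 * i + 3 := by
  refine ⟨Ddepth_psiFam_succ_le, fun i => ?_⟩
  induction i with
  | zero => exact Ddepth_psiFam_zero_le
  | succ i ih =>
      have hstep := Ddepth_psiFam_succ_le i
      have hshift := (psiFam i).Ddepth_shift_le (nv i)
      omega
end
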